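/- For every deterministic parity automaton A over the alphabet ℕ, the Gale–Stewart game Γ(L_A) is determined: either Player I or Player II has a winning strategy. -/

import Mathlib

/-- The maximal color occurring infinitely often in the sequence `s` exists and is even. -/
def MaxInfEven (s : ℕ → ℕ) : Prop :=
  ∃ m, Even m ∧ {k | s k = m}.Infinite ∧ ∀ m', {k | s k = m'}.Infinite → m' ≤ m

/-- The list `m 0, …, m k`. -/
def prefixList (m : ℕ → ℕ) (k : ℕ) : List ℕ :=
  List.ofFn (fun i : Fin (k + 1) => m i.val)

/-- The interleaving `m 0, n 0, m 1, n 1, …` of two sequences. -/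
def interleave (m n : ℕ → ℕ) : ℕ → ℕ :=
  fun k => if k % 2 = 0 then m (k / 2) else n (k / 2)

/-- `σ` is a winning strategy for Player II in the Gale–Stewart game with winning
condition `L`: for every sequence of choices of Player I, the play in which Player II
answers `m₀ … m_k` with `σ (m₀ … m_k)` belongs to `L`. -/
def IsWinningStrategyII (L : Set (ℕ → ℕ)) (σ : List ℕ → ℕ) : Prop :=
  ∀ m : ℕ → ℕ, interleave m (fun k => σ (prefixList m k)) ∈ L

/-- Player II wins the Gale–Stewart game with winning condition `L`. -/
def WinsII (L : Set (ℕ → ℕ)) : Prop := ∃ σ, IsWinningStrategyII L σ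

/-- The sequence of choices of Player I determined by the strategy `τ` against the
choices `n` of Player II: `m₀ = τ ε` and `m_{k+1} = τ (n₀ … n_k)`. -/
def playerIMoves (τ : List ℕ → ℕ) (n : ℕ → ℕ) : ℕ → ℕ
  | 0 => τ []
  | k + 1 => τ (prefixList n k)

/-- `τ` is a winning strategy for Player I in the Gale–Stewart game with winning
condition `L`. -/
def IsWinningStrategyI (L : Set (ℕ → ℕ)) (τ : List ℕ → ℕ) : Prop :=
  ∀ n : ℕ → ℕ, interleave (playerIMoves τ n) n ∉ L

/-- Player I wins the Gale–Stewart game with winning condition `L`. -/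
def WinsI (L : Set (ℕ → ℕ)) : Prop := ∃ τ, IsWinningStrategyI L τ

/-- A deterministic parity automaton over the alphabet ℕ, with control states `Q`,
configurations in `Q × ℕ`, transition function `next` and coloring `color`. -/
structure DPA (Q : Type) where
  q0 : Q
  next : Q × ℕ → ℕ → Q × ℕ
  color : Q → ℕ

/-- The run of `A` on `α`: the sequence of configurations starting in `(q₀, 0)`. -/
def DPA.run {Q : Type} (A : DPA Q) (α : ℕ → ℕ) : ℕ → Q × ℕ
  | 0 => (A.q0, 0)
  | k + 1 => A.next (DPA.run A α k) (α k)

/-- The ω-language recognized by `A`: the ω-words whose run has an even maximal color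
occurring infinitely often. -/
def DPA.Lang {Q : Type} (A : DPA Q) : Set (ℕ → ℕ) :=
  {α | MaxInfEven (fun k => A.color (A.run α k).1)}


namespace PGame

/-- parity winning condition for player `P` (true = "even" player). -/
def ParityOk (P : Bool) (m : ℕ) : Prop := if P then Even m else ¬ Even m

def parityWin (P : Bool) (s : ℕ → ℕ) : Prop :=
  ∃ m, ParityOk P m ∧ {k | s k = m}.Infinite ∧ ∀ m', {k | s k = m'}.Infinite → m' ≤ m

lemma infinite_shift (p : ℕ → Prop) (K : ℕ) :
    {k | p (k + K)}.Infinite ↔ {k | p k}.Infinite := by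
  constructor
  · intro h
    have himg : ((· + K) '' {k | p (k + K)}).Infinite :=
      h.image (Set.injOn_of_injective (add_left_injective K))
    refine himg.mono ?_
    rintro x ⟨y, hy, rfl⟩; exact hy
  · intro h
    have h2 : ({k | p k} \ {k | k < K}).Infinite := h.diff (Set.finite_lt_nat K)
    have : ({k | p k} \ {k | k < K}) ⊆ (· + K) '' {k | p (k + K)} := by
      rintro x ⟨hx, hx2⟩
      simp only [Set.mem_setOf_eq, not_lt] at hx2 ⊢
      exact ⟨x - K, by simpa [Nat.sub_add_cancel hx2] using hx, Nat.sub_add_cancel hx2⟩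
    exact Set.Infinite.of_image _ (h2.mono this)

lemma parityWin_shift_iff (P : Bool) (s : ℕ → ℕ) (K : ℕ) :
    parityWin P (fun k => s (k + K)) ↔ parityWin P s := by
  unfold parityWin
  refine exists_congr fun m => and_congr_right fun _ => ?_
  rw [infinite_shift (fun k => s k = m) K]
  refine and_congr_right fun _ => forall_congr' fun m' => ?_
  rw [infinite_shift (fun k => s k = m') K]

lemma parityWin_not_both {P : Bool} {s : ℕ → ℕ} (h1 : parityWin P s) (h2 : parityWin (!P) s) :
    False := by
  obtain ⟨m, hm, hi, hmax⟩ := h1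
  obtain ⟨m', hm', hi', hmax'⟩ := h2
  have : m = m' := le_antisymm (hmax' m hi) (hmax m' hi')
  subst this
  cases P
  · exact (Nat.not_even_iff_odd.mpr (by simpa [ParityOk] using hm))
      (by simpa [ParityOk] using hm')
  · exact (Nat.not_even_iff_odd.mpr (by simpa [ParityOk] using hm'))
      (by simpa [ParityOk] using hm)

variable {V : Type} (move : V → ℕ → V) (owner : V → Bool) (col : V → ℕ)

/-- The play from `v` with letter sequence `a`. -/
def pos (v : V) (a : ℕ → ℕ) : ℕ → V
  | 0 => v
  | k + 1 => move (pos v a k) (a k)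

/-- `a` is consistent with the positional strategy `s` of player `P` from `v`. -/
def Cons (P : Bool) (s : V → ℕ) (v : V) (a : ℕ → ℕ) : Prop :=
  ∀ k, owner (pos move v a k) = P → a k = s (pos move v a k)

/-- positional strategy `s` wins for `P` from `v`. -/
def pwin (P : Bool) (s : V → ℕ) (v : V) : Prop :=
  ∀ a, Cons move owner P s v a → parityWin P (fun k => col (pos move v a k))

def PW (P : Bool) (v : V) : Prop := ∃ s, pwin move owner col P s v

lemma pos_add (v : V) (a : ℕ → ℕ) (K k : ℕ) :
    pos move v a (K + k) = pos move (pos move v a K) (fun i => a (i + K)) k := by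
  induction k with
  | zero => rfl
  | succ k ih =>
      rw [← Nat.add_assoc]
      show move (pos move v a (K + k)) (a (K + k))
        = move (pos move (pos move v a K) (fun i => a (i + K)) k) (a (k + K))
      rw [ih, Nat.add_comm K k]

lemma cons_shift {P : Bool} {s : V → ℕ} {v : V} {a : ℕ → ℕ}
    (h : Cons move owner P s v a) (K : ℕ) :
    Cons move owner P s (pos move v a K) (fun i => a (i + K)) := by
  intro k hk
  rw [← pos_add] at hk
  have h2 := h (K + k) hk
  show a (k + K) = s (pos move (pos move v a K) (fun i => a (i + K)) k)
  rw [← pos_add, Nat.add_comm k K]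
  exact h2

/-- residual: a winning strategy stays winning after one consistent step. -/
lemma pwin_step {P : Bool} {s : V → ℕ} {v : V} (h : pwin move owner col P s v)
    (m : ℕ) (hm : owner v = P → m = s v) : pwin move owner col P s (move v m) := by
  intro a ha
  set b : ℕ → ℕ := fun k => Nat.rec m (fun k _ => a k) k with hb
  have hposb : ∀ k, pos move v b (k + 1) = pos move (move v m) a k := by
    intro k
    induction k with
    | zero => rfl
    | succ k ih =>
        show move (pos move v b (k+1)) (a k) = _
        rw [ih]; rfl
  have hconsb : Cons move owner P s v b := by
    intro k hk
    cases k with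
    | zero => exact hm hk
    | succ k => rw [hposb k] at hk ⊢; exact ha k hk
  have hwin := h b hconsb
  have := (parityWin_shift_iff P (fun k => col (pos move v b k)) 1).mpr hwin
  have heq : (fun k => col (pos move v b (k + 1))) = fun k => col (pos move (move v m) a k) := by
    funext k; rw [hposb k]
  rwa [heq] at this
/-- Uniformization: a single positional strategy winning from every vertex of `W`. -/
lemma uniformize (P : Bool) (W : Set V) (hW : ∀ v ∈ W, PW move owner col P v) :
    ∃ s : V → ℕ, ∀ v ∈ W, pwin move owner col P s v := by
  classical
  have hfam : ∀ u : V, ∃ t : V → ℕ, u ∈ W → pwin move owner col P t u := by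
    intro u
    by_cases hu : u ∈ W
    · obtain ⟨t, ht⟩ := hW u hu; exact ⟨t, fun _ => ht⟩
    · exact ⟨fun _ => 0, fun h => absurd h hu⟩
  choose σfam hσfam using hfam
  set r := @WellOrderingRel V with hr
  have wf : WellFounded r := (inferInstance : IsWellOrder V r).wf
  set Good : V → V → Prop := fun u v => pwin move owner col P (σfam u) v with hGood
  set D : V → Set V := fun v => {u | Good u v} with hD
  set g : V → V := fun v => if h : (D v).Nonempty then wf.min (D v) h else v with hg
  have hgmem : ∀ v, (D v).Nonempty → Good (g v) v := by
    intro v h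
    have : g v = wf.min (D v) h := by rw [hg]; exact dif_pos h
    rw [this]
    exact wf.min_mem (D v) h
  have hgmin : ∀ v (h : (D v).Nonempty), ∀ u ∈ D v, ¬ r u (g v) := by
    intro v h u hu
    have : g v = wf.min (D v) h := by rw [hg]; exact dif_pos h
    rw [this]
    exact wf.not_lt_min (D v) hu
  refine ⟨fun v => σfam (g v) v, ?_⟩
  intro v hv a ha
  set w : ℕ → V := fun k => pos move v a k with hw
  set y : ℕ → V := fun k => g (w k) with hy
  have hstep : ∀ k, (D (w k)).Nonempty →
      ((D (w (k+1))).Nonempty ∧ ¬ r (y k) (y (k+1))) := by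
    intro k hk
    have hgood : Good (y k) (w k) := hgmem _ hk
    have hnext : Good (y k) (w (k+1)) :=
      pwin_step move owner col hgood (a k) (fun ho => ha k ho)
    have hne : (D (w (k+1))).Nonempty := ⟨y k, hnext⟩
    exact ⟨hne, hgmin (w (k+1)) hne (y k) hnext⟩
  have hDne : ∀ k, (D (w k)).Nonempty := by
    intro k
    induction k with
    | zero => exact ⟨v, hσfam v hv⟩
    | succ k ih => exact (hstep k ih).1
  have hdec : ∀ k, ¬ r (y k) (y (k+1)) := fun k => (hstep k (hDne k)).2
  have hgood : ∀ k, Good (y k) (w k) := fun k => hgmem _ (hDne k)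
  have hrange : (Set.range y).Nonempty := ⟨y 0, ⟨0, rfl⟩⟩
  obtain ⟨K, hK⟩ := Set.mem_range.mp (wf.min_mem _ hrange)
  have hstab : ∀ k, K ≤ k → y k = wf.min _ hrange := by
    intro k hk
    induction k, hk using Nat.le_induction with
    | base => exact hK
    | succ k hk ih =>
      rcases trichotomous_of r (y (k+1)) (wf.min _ hrange) with h1 | h1 | h1
      · exact absurd h1 (wf.not_lt_min (Set.range y) ⟨k+1, rfl⟩)
      · exact h1
      · rw [← ih] at h1; exact absurd h1 (hdec k)
  have hconsTail : Cons move owner P (σfam (wf.min _ hrange)) (w K) (fun i => a (i + K)) := by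
    intro j hj
    rw [← pos_add] at hj
    show a (j + K) = σfam _ (pos move (pos move v a K) (fun i => a (i + K)) j)
    rw [← pos_add]
    have ho : owner (w (K + j)) = P := hj
    have h2 := ha (K + j) ho
    rw [Nat.add_comm j K, h2]
    have h3 := hstab (K + j) (Nat.le_add_right K j)
    show σfam (g (w (K + j))) (w (K + j)) = _
    rw [show g (w (K + j)) = y (K + j) from rfl, h3]
  have hgK : Good (wf.min _ hrange) (w K) := by
    have := hgood K
    rwa [hstab K le_rfl] at this
  have hparTail := hgK _ hconsTail
  have heq : (fun j => col (pos move (pos move v a K) (fun i => a (i + K)) j))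
      = fun j => col (pos move v a (j + K)) := by
    funext j
    rw [← pos_add, Nat.add_comm K j]
  rw [heq] at hparTail
  exact (parityWin_shift_iff P _ K).mp hparTail
section Attractor

variable (T : Bool) (S Ntgt : Set V)

/-- one step of the attractor construction for player `T` towards `Ntgt` inside `S`. -/
def attF (X : Set V) : Set V :=
  {v | v ∈ S ∧ (v ∈ Ntgt ∨ (owner v = T ∧ ∃ m, move v m ∈ X) ∨
    (owner v ≠ T ∧ ∀ m, move v m ∈ X))}

lemma attF_mono {X Y : Set V} (h : X ⊆ Y) : attF move owner T S Ntgt X ⊆ attF move owner T S Ntgt Y := by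
  rintro v ⟨hS, h1 | ⟨ho, m, hm⟩ | ⟨ho, hall⟩⟩
  · exact ⟨hS, Or.inl h1⟩
  · exact ⟨hS, Or.inr (Or.inl ⟨ho, m, h hm⟩)⟩
  · exact ⟨hS, Or.inr (Or.inr ⟨ho, fun m => h (hall m)⟩)⟩

noncomputable def stages : Ordinal.{0} → Set V :=
  Ordinal.lt_wf.fix (fun o ih => attF move owner T S Ntgt (⋃ o', ⋃ h : o' < o, ih o' h))

lemma stages_eq (o : Ordinal.{0}) :
    stages move owner T S Ntgt o
      = attF move owner T S Ntgt (⋃ o', ⋃ _ : o' < o, stages move owner T S Ntgt o') :=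
  Ordinal.lt_wf.fix_eq _ o

def Attr : Set V := {v | ∃ o : Ordinal.{0}, v ∈ stages move owner T S Ntgt o}

noncomputable def rank (v : V) : Ordinal.{0} :=
  sInf {o : Ordinal.{0} | v ∈ stages move owner T S Ntgt o}

lemma attr_sub : Attr move owner T S Ntgt ⊆ S := by
  rintro v ⟨o, ho⟩
  rw [stages_eq] at ho
  exact ho.1

lemma mem_stages_rank {v : V} (h : v ∈ Attr move owner T S Ntgt) :
    v ∈ stages move owner T S Ntgt (rank move owner T S Ntgt v) :=
  csInf_mem (s := {o : Ordinal.{0} | v ∈ stages move owner T S Ntgt o}) h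

lemma rank_le {v : V} {o : Ordinal.{0}} (h : v ∈ stages move owner T S Ntgt o) :
    rank move owner T S Ntgt v ≤ o :=
  csInf_le (OrderBot.bddBelow _) h

/-- unfolding at the rank: the witnesses have strictly smaller rank. -/
lemma attr_unfold {v : V} (h : v ∈ Attr move owner T S Ntgt) :
    v ∈ attF move owner T S Ntgt
      {u | u ∈ Attr move owner T S Ntgt ∧
        rank move owner T S Ntgt u < rank move owner T S Ntgt v} := by
  have h1 := mem_stages_rank move owner T S Ntgt h
  rw [stages_eq] at h1
  refine attF_mono move owner T S Ntgt ?_ h1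
  intro u hu
  simp only [Set.mem_iUnion] at hu
  obtain ⟨o', ho', hu⟩ := hu
  exact ⟨⟨o', hu⟩, lt_of_le_of_lt (rank_le move owner T S Ntgt hu) ho'⟩

lemma attr_base {v : V} (hS : v ∈ S) (hN : v ∈ Ntgt) : v ∈ Attr move owner T S Ntgt := by
  refine ⟨0, ?_⟩
  rw [stages_eq]
  exact ⟨hS, Or.inl hN⟩

lemma attr_closure_T {v : V} (hS : v ∈ S) (ho : owner v = T) {m : ℕ}
    (hm : move v m ∈ Attr move owner T S Ntgt) : v ∈ Attr move owner T S Ntgt := by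
  obtain ⟨o, hmo⟩ := hm
  refine ⟨o + 1, ?_⟩
  rw [stages_eq]
  refine ⟨hS, Or.inr (Or.inl ⟨ho, m, ?_⟩)⟩
  simp only [Set.mem_iUnion]
  exact ⟨o, lt_add_one o, hmo⟩

lemma attr_closure_O {v : V} (hS : v ∈ S) (ho : owner v ≠ T)
    (hall : ∀ m, move v m ∈ Attr move owner T S Ntgt) : v ∈ Attr move owner T S Ntgt := by
  classical
  choose os hos using hall
  refine ⟨(⨆ m, os m) + 1, ?_⟩
  rw [stages_eq]
  refine ⟨hS, Or.inr (Or.inr ⟨ho, fun m => ?_⟩)⟩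
  simp only [Set.mem_iUnion]
  refine ⟨os m, ?_, hos m⟩
  exact lt_of_le_of_lt (le_ciSup (Ordinal.bddAbove_range _) m) (lt_add_one _)

end Attractor
attribute [local instance] Classical.propDecidable

lemma bool_ne {a b : Bool} (h : a ≠ b) : a = !b := by
  cases a <;> cases b <;> simp_all

lemma infinite_of_unbounded {s : Set ℕ} (h : ∀ K, ∃ j, K ≤ j ∧ j ∈ s) : s.Infinite := by
  apply Set.infinite_of_not_bddAbove
  rintro ⟨b, hb⟩
  obtain ⟨j, hj1, hj2⟩ := h (b + 1)
  exact absurd (hb hj2) (by omega)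

lemma parityWin_tail {P : Bool} {v : V} {a : ℕ → ℕ} (K : ℕ)
    (h : parityWin P fun j => col (pos move (pos move v a K) (fun i => a (i + K)) j)) :
    parityWin P fun k => col (pos move v a k) := by
  have heq : (fun j => col (pos move (pos move v a K) (fun i => a (i + K)) j))
      = fun j => col (pos move v a (j + K)) := by
    funext j; rw [← pos_add, Nat.add_comm K j]
  rw [heq] at h
  exact (parityWin_shift_iff P _ K).mp h

lemma cons_tail (P : Bool) (t : V → ℕ) {v : V} {a : ℕ → ℕ} (K : ℕ)
    (h : ∀ j, K ≤ j → owner (pos move v a j) = P → a j = t (pos move v a j)) :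
    Cons move owner P t (pos move v a K) (fun i => a (i + K)) := by
  intro j hj
  rw [← pos_add] at hj
  show a (j + K) = t (pos move (pos move v a K) (fun i => a (i + K)) j)
  rw [← pos_add, Nat.add_comm j K]
  exact h (K + j) (Nat.le_add_right K j) hj

section Subgame

variable (S' : Set V) (stay : V → ℕ)

noncomputable def subMove : V → ℕ → V := fun v m => if v ∈ S' ∧ move v m ∈ S' then move v m else move v (stay v)

noncomputable def subCol : V → ℕ := fun v => if v ∈ S' then col v else 0

noncomputable def trS (t' : V → ℕ) : V → ℕ := fun v => if v ∈ S' ∧ move v (t' v) ∈ S' then t' v else stay v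

lemma trS_spec (t' : V → ℕ) {v : V} (hv : v ∈ S') :
    move v (trS move S' stay t' v) = subMove move S' stay v (t' v) := by
  by_cases h : move v (t' v) ∈ S' <;> simp [trS, subMove, hv, h]

lemma subMove_stays (hstay : ∀ v ∈ S', move v (stay v) ∈ S') :
    ∀ v ∈ S', ∀ m, subMove move S' stay v m ∈ S' := by
  intro v hv m
  by_cases h : v ∈ S' ∧ move v m ∈ S'
  · simpa [subMove, h] using h.2
  · simpa [subMove, h] using hstay v hv

lemma trS_stays (hstay : ∀ v ∈ S', move v (stay v) ∈ S') (t' : V → ℕ) {v : V} (hv : v ∈ S') :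
    move v (trS move S' stay t' v) ∈ S' := by
  rw [trS_spec move S' stay t' hv]
  exact subMove_stays move S' stay hstay v hv _

lemma simulate (X : Bool) (t' : V → ℕ) (u : V) (a : ℕ → ℕ)
    (hall : ∀ k, pos move u a k ∈ S')
    (hX : ∀ k, owner (pos move u a k) = X → a k = trS move S' stay t' (pos move u a k))
    (hwin : pwin (subMove move S' stay) owner (subCol col S') X t' u) :
    parityWin X (fun k => col (pos move u a k)) := by
  set a'' : ℕ → ℕ := fun k => if owner (pos move u a k) = X then t' (pos move u a k) else a k
    with ha''
  have hpos : ∀ k, pos (subMove move S' stay) u a'' k = pos move u a k := by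
    intro k
    induction k with
    | zero => rfl
    | succ k ih =>
      show subMove move S' stay (pos (subMove move S' stay) u a'' k) (a'' k)
        = move (pos move u a k) (a k)
      rw [ih]
      by_cases ho : owner (pos move u a k) = X
      · have : a'' k = t' (pos move u a k) := by simp [ha'', ho]
        rw [this, ← trS_spec move S' stay t' (hall k), ← hX k ho]
      · have : a'' k = a k := by simp [ha'', ho]
        rw [this]
        have h2 : pos move u a k ∈ S' ∧ move (pos move u a k) (a k) ∈ S' :=
          ⟨hall k, hall (k + 1)⟩
        simp [subMove, h2]
  have hcons : Cons (subMove move S' stay) owner X t' u a'' := by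
    intro k hk
    rw [hpos k] at hk ⊢
    simp [ha'', hk]
  have hw := hwin a'' hcons
  have heq : (fun k => subCol col S' (pos (subMove move S' stay) u a'' k))
      = fun k => col (pos move u a k) := by
    funext k; rw [hpos k]; simp [subCol, hall k]
  rwa [heq] at hw

end Subgame
lemma bool_or_elim {p : Bool → Prop} (b : Bool) (h : p true ∨ p false) : p b ∨ p (!b) := by
  cases b
  · exact h.symm
  · exact h

lemma bool_or_intro {p : Bool → Prop} (b : Bool) (h : p b ∨ p (!b)) : p true ∨ p false := by
  cases b
  · exact h.symm
  · exact h

theorem pdet (d : ℕ) :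
    ∀ (mv : V → ℕ → V) (cl : V → ℕ), (∀ u, cl u ≤ d) →
      ∀ v, PW mv owner cl true v ∨ PW mv owner cl false v := by
  induction d with
  | zero =>
    intro mv cl hb v
    left
    refine ⟨fun _ => 0, fun a _ => ⟨0, by simp [ParityOk], ?_, ?_⟩⟩
    · have he : {k | cl (pos mv v a k) = 0} = Set.univ := by
        ext k; simp [Nat.le_zero.mp (hb _)]
      rw [he]; exact Set.infinite_univ
    · intro m' hm'
      obtain ⟨k, hk⟩ := hm'.nonempty
      have := hb (pos mv v a k)
      simp only [Set.mem_setOf_eq] at hk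
      omega
  | succ d IH =>
    intro mv cl hb
    have hexT : ∃ T : Bool, ParityOk T (d + 1) := by
      by_cases h : Even (d + 1)
      · exact ⟨true, by simp [ParityOk, h]⟩
      · exact ⟨false, by simp [ParityOk, h]⟩
    obtain ⟨T, hTpar⟩ := hexT
    suffices hdet : ∀ v, PW mv owner cl T v ∨ PW mv owner cl (!T) v by
      intro v
      exact bool_or_intro (p := fun b => PW mv owner cl b v) T (hdet v)
    classical
    set W : Set V := {u | PW mv owner cl (!T) u} with hWdef
    obtain ⟨σO, hσO⟩ := uniformize mv owner cl (!T) W (fun u hu => hu)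
    have hWstep : ∀ u ∈ W, ∀ m, (owner u = !T → m = σO u) → mv u m ∈ W :=
      fun u hu m hm => ⟨σO, pwin_step mv owner cl (hσO u hu) m hm⟩
    set S : Set V := {u | u ∉ W} with hSdef
    have hWS : ∀ u : V, u ∉ S → u ∈ W := fun u hu => not_not.mp hu
    -- O-vertices outside W cannot move into W
    have hF1 : ∀ v ∈ S, owner v = !T → ∀ m, mv v m ∈ S := by
      intro v hv ho m
      by_contra hmem
      have hmW : mv v m ∈ W := hWS _ hmem
      set s : V → ℕ := fun u => if u = v then m else σO u with hsdef
      refine hv (⟨s, ?_⟩ : PW mv owner cl (!T) v)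
      intro a ha
      have h1 : pos mv v a 1 = mv v m := by
        show mv v (a 0) = mv v m
        rw [ha 0 ho]
        rw [show pos mv v a 0 = v from rfl]
        simp [hsdef]
      have hWk : ∀ k, pos mv v a (k + 1) ∈ W := by
        intro k; induction k with
        | zero => rw [show pos mv v a (0+1) = mv v m from h1]; exact hmW
        | succ k ih =>
          refine hWstep _ ih (a (k+1)) (fun ho2 => ?_)
          have hne : pos mv v a (k+1) ≠ v := fun he => hv (he ▸ ih)
          rw [ha (k+1) ho2]; simp [hsdef, hne]
      have htail : Cons mv owner (!T) σO (pos mv v a 1) (fun i => a (i + 1)) := by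
        refine cons_tail mv owner (!T) σO 1 ?_
        intro j hj ho2
        have hne : pos mv v a j ≠ v := by
          intro he
          obtain ⟨j', rfl⟩ : ∃ j', j = j' + 1 := ⟨j - 1, by omega⟩
          exact hv (he ▸ hWk j')
        rw [ha j ho2]; simp [hsdef, hne]
      have hw := hσO _ (by rw [show pos mv v a 1 = mv v m from h1]; exact hmW) _ htail
      exact parityWin_tail mv cl 1 hw
    -- T-vertices outside W have a move outside W
    have hF2 : ∀ v ∈ S, owner v = T → ∃ m, mv v m ∈ S := by
      intro v hv ho
      by_contra hall
      push_neg at hall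
      refine hv (⟨σO, ?_⟩ : PW mv owner cl (!T) v)
      intro a ha
      have hWk : ∀ k, pos mv v a (k + 1) ∈ W := by
        intro k; induction k with
        | zero => exact hWS _ (hall (a 0))
        | succ k ih => exact hWstep _ ih (a (k+1)) (fun ho2 => ha (k+1) ho2)
      have htail : Cons mv owner (!T) σO (pos mv v a 1) (fun i => a (i + 1)) :=
        cons_tail mv owner (!T) σO 1 (fun j hj ho2 => ha j ho2)
      exact parityWin_tail mv cl 1 (hσO _ (hWk 0) _ htail)
    have hstayS : ∀ v ∈ S, ∃ m, mv v m ∈ S := by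
      intro v hv
      by_cases ho : owner v = T
      · exact hF2 v hv ho
      · exact ⟨0, hF1 v hv (bool_ne ho) 0⟩
    -- the attractor of the top color
    set Ntgt : Set V := {u | cl u = d + 1} with hNdef
    set A : Set V := Attr mv owner T S Ntgt with hAdef
    set rk : V → Ordinal.{0} := rank mv owner T S Ntgt with hrkdef
    have hAsub : A ⊆ S := attr_sub mv owner T S Ntgt
    set S' : Set V := {u | u ∈ S ∧ u ∉ A} with hS'def
    have hS'S : S' ⊆ S := fun u hu => hu.1
    have hstayS' : ∀ v ∈ S', ∃ m, mv v m ∈ S' := by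
      intro v hv
      obtain ⟨hvS, hvA⟩ := hv
      by_cases ho : owner v = T
      · by_contra hall
        push_neg at hall
        obtain ⟨m, hm⟩ := hF2 v hvS ho
        have hmA : mv v m ∈ A := by
          by_contra h2; exact hall m ⟨hm, h2⟩
        exact hvA (attr_closure_T mv owner T S Ntgt hvS ho hmA)
      · by_contra hall
        push_neg at hall
        refine hvA (attr_closure_O mv owner T S Ntgt hvS ho (fun m => ?_))
        have hmS : mv v m ∈ S := hF1 v hvS (bool_ne ho) m
        by_contra h2
        exact hall m ⟨hmS, h2⟩
    have hstayfun : ∀ v, ∃ m, v ∈ S' → mv v m ∈ S' := by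
      intro v
      by_cases h : v ∈ S'
      · obtain ⟨m, hm⟩ := hstayS' v h; exact ⟨m, fun _ => hm⟩
      · exact ⟨0, fun h2 => absurd h2 h⟩
    choose stay hstay using hstayfun
    have hstay' : ∀ v ∈ S', mv v (stay v) ∈ S' := fun v hv => hstay v hv
    have hbound' : ∀ u, subCol cl S' u ≤ d := by
      intro u
      by_cases h : u ∈ S'
      · have h1 : cl u ≤ d + 1 := hb u
        have h2 : cl u ≠ d + 1 := fun he => h.2 (attr_base mv owner T S Ntgt h.1 he)
        simp only [subCol, if_pos h]
        omega
      · simp [subCol, h]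
    have hIH := IH (subMove mv S' stay) (subCol cl S') hbound'
    have hIH' : ∀ u, PW (subMove mv S' stay) owner (subCol cl S') T u
        ∨ PW (subMove mv S' stay) owner (subCol cl S') (!T) u :=
      fun u => bool_or_elim (p := fun b => PW (subMove mv S' stay) owner (subCol cl S') b u)
        T (hIH u)
    -- T wins the subgame from every vertex of S'
    have hTS' : ∀ u ∈ S', PW (subMove mv S' stay) owner (subCol cl S') T u := by
      intro u hu
      rcases hIH' u with h | h
      · exact h
      exfalso
      obtain ⟨t', ht'⟩ := h
      set s : V → ℕ := fun x => if x ∈ S' then trS mv S' stay t' x else σO x with hsdef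
      refine hu.1 (⟨s, ?_⟩ : PW mv owner cl (!T) u)
      intro a ha
      by_cases hcase : ∀ k, pos mv u a k ∈ S'
      · refine simulate mv owner cl S' stay (!T) t' u a hcase ?_ ht'
        intro k hk
        rw [ha k hk]
        simp [hsdef, hcase k]
      · push_neg at hcase
        have hex : ∃ k, pos mv u a k ∉ S' := hcase
        have hKnot : pos mv u a (Nat.find hex) ∉ S' := Nat.find_spec hex
        have hKlt : ∀ j, j < Nat.find hex → pos mv u a j ∈ S' :=
          fun j hj => not_not.mp (Nat.find_min hex hj)
        have hK1 : Nat.find hex ≠ 0 := by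
          intro h0
          rw [h0] at hKnot
          exact hKnot hu
        obtain ⟨K', hK'⟩ : ∃ K', Nat.find hex = K' + 1 := ⟨Nat.find hex - 1, by omega⟩
        have hprev : pos mv u a K' ∈ S' := hKlt K' (by omega)
        have hKnot' : pos mv u a (K' + 1) ∉ S' := hK' ▸ hKnot
        have hoT : owner (pos mv u a K') = T := by
          by_contra ho
          have ho2 : owner (pos mv u a K') = !T := bool_ne ho
          have he := ha K' ho2
          refine hKnot' ?_
          show mv (pos mv u a K') (a K') ∈ S'
          rw [he]
          have : s (pos mv u a K') = trS mv S' stay t' (pos mv u a K') := by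
            simp [hsdef, hprev]
          rw [this]
          exact trS_stays mv S' stay hstay' t' hprev
        have hKW : pos mv u a (K' + 1) ∈ W := by
          by_contra hW2
          have hSx : pos mv u a (K' + 1) ∈ S := hW2
          have hA2 : pos mv u a (K' + 1) ∈ A := by
            by_contra hA3
            exact hKnot' ⟨hSx, hA3⟩
          exact hprev.2 (attr_closure_T mv owner T S Ntgt hprev.1 hoT hA2)
        have hWk : ∀ j, K' + 1 ≤ j → pos mv u a j ∈ W := by
          intro j hj
          induction j, hj using Nat.le_induction with
          | base => exact hKW
          | succ j hj ih =>
            refine hWstep _ ih (a j) (fun ho2 => ?_)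
            have hnotS' : pos mv u a j ∉ S' := fun hmem => hmem.1 ih
            rw [ha j ho2]; simp [hsdef, hnotS']
        have htail : Cons mv owner (!T) σO (pos mv u a (K' + 1)) (fun i => a (i + (K' + 1))) := by
          refine cons_tail mv owner (!T) σO (K' + 1) ?_
          intro j hj ho2
          have hnotS' : pos mv u a j ∉ S' := fun hmem => hmem.1 (hWk j hj)
          rw [ha j ho2]; simp [hsdef, hnotS']
        exact parityWin_tail mv cl (K' + 1) (hσO _ hKW _ htail)
    obtain ⟨σT', hσT'⟩ := uniformize (subMove mv S' stay) owner (subCol cl S') T S' hTS'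
    -- attractor moves
    have hattrex : ∀ v, ∃ m, v ∈ A → v ∉ Ntgt → owner v = T →
        (mv v m ∈ A ∧ rk (mv v m) < rk v) := by
      intro v
      by_cases h : v ∈ A ∧ v ∉ Ntgt ∧ owner v = T
      · obtain ⟨hA1, hN1, hoT⟩ := h
        rcases (attr_unfold mv owner T S Ntgt hA1).2 with h1 | ⟨_, m, hm⟩ | ⟨ho2, _⟩
        · exact absurd h1 hN1
        · exact ⟨m, fun _ _ _ => hm⟩
        · exact absurd hoT ho2
      · exact ⟨0, fun h1 h2 h3 => absurd ⟨h1, h2, h3⟩ h⟩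
    choose attm hattm using hattrex
    have hstSex : ∀ v, ∃ m, v ∈ S → mv v m ∈ S := by
      intro v
      by_cases h : v ∈ S
      · obtain ⟨m, hm⟩ := hstayS v h; exact ⟨m, fun _ => hm⟩
      · exact ⟨0, fun h2 => absurd h2 h⟩
    choose stS hstS using hstSex
    set sT : V → ℕ := fun x => if x ∈ S' then trS mv S' stay σT' x
      else if x ∈ A ∧ x ∉ Ntgt ∧ owner x = T then attm x else stS x with hsTdef
    have hfinal : ∀ v ∈ S, pwin mv owner cl T sT v := by
      intro v hv a ha
      have hinv : ∀ k, pos mv v a k ∈ S := by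
        intro k; induction k with
        | zero => exact hv
        | succ k ih =>
          by_cases ho : owner (pos mv v a k) = T
          · have hk := ha k ho
            show mv (pos mv v a k) (a k) ∈ S
            rw [hk]
            by_cases h1 : pos mv v a k ∈ S'
            · have h2 : sT (pos mv v a k) = trS mv S' stay σT' (pos mv v a k) := by
                simp [hsTdef, h1]
              rw [h2]
              exact hS'S (trS_stays mv S' stay hstay' σT' h1)
            · by_cases h2 : pos mv v a k ∈ A ∧ pos mv v a k ∉ Ntgt ∧ owner (pos mv v a k) = T
              · have h3 : sT (pos mv v a k) = attm (pos mv v a k) := by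
                  simp only [hsTdef, if_neg h1, if_pos h2]
                rw [h3]
                exact hAsub (hattm _ h2.1 h2.2.1 h2.2.2).1
              · have h3 : sT (pos mv v a k) = stS (pos mv v a k) := by
                  simp only [hsTdef, if_neg h1, if_neg h2]
                rw [h3]
                exact hstS _ ih
          · exact hF1 _ ih (bool_ne ho) (a k)
      have hreach : ∀ o : Ordinal.{0}, ∀ k, pos mv v a k ∈ A → rk (pos mv v a k) = o →
          ∃ j, k ≤ j ∧ cl (pos mv v a j) = d + 1 := by
        intro o
        induction o using Ordinal.induction with
        | h o IHo =>
          intro k hkA hrkk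
          by_cases hN2 : pos mv v a k ∈ Ntgt
          · exact ⟨k, le_rfl, hN2⟩
          rcases (attr_unfold mv owner T S Ntgt hkA).2 with h1 | ⟨hoT, _⟩ | ⟨hoO, hall⟩
          · exact absurd h1 hN2
          · have hk := ha k hoT
            have hnotS' : pos mv v a k ∉ S' := fun hm => hm.2 hkA
            have hcond : pos mv v a k ∈ A ∧ pos mv v a k ∉ Ntgt ∧ owner (pos mv v a k) = T :=
              ⟨hkA, hN2, hoT⟩
            have h3 : sT (pos mv v a k) = attm (pos mv v a k) := by
              simp only [hsTdef, if_neg hnotS', if_pos hcond]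
            have hstep2 := hattm _ hkA hN2 hoT
            have hnext : pos mv v a (k+1) ∈ A := by
              show mv (pos mv v a k) (a k) ∈ A
              rw [hk, h3]; exact hstep2.1
            have hlt : rk (pos mv v a (k+1)) < o := by
              rw [← hrkk]
              show rk (mv (pos mv v a k) (a k)) < _
              rw [hk, h3]; exact hstep2.2
            obtain ⟨j, hj1, hj2⟩ := IHo _ hlt (k+1) hnext rfl
            exact ⟨j, by omega, hj2⟩
          · have h3 := hall (a k)
            have hnext : pos mv v a (k+1) ∈ A := h3.1
            have hlt : rk (pos mv v a (k+1)) < o := hrkk ▸ h3.2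
            obtain ⟨j, hj1, hj2⟩ := IHo _ hlt (k+1) hnext rfl
            exact ⟨j, by omega, hj2⟩
      by_cases hfin2 : ∃ K, ∀ k, K ≤ k → pos mv v a k ∈ S'
      · obtain ⟨K, hK⟩ := hfin2
        have hallK : ∀ k, pos mv (pos mv v a K) (fun i => a (i + K)) k ∈ S' := by
          intro k
          rw [← pos_add]
          exact hK (K + k) (Nat.le_add_right K k)
        have hX : ∀ k, owner (pos mv (pos mv v a K) (fun i => a (i + K)) k) = T →
            (fun i => a (i + K)) k
              = trS mv S' stay σT' (pos mv (pos mv v a K) (fun i => a (i + K)) k) := by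
          intro k hk
          rw [← pos_add] at hk
          show a (k + K) = trS mv S' stay σT' (pos mv (pos mv v a K) (fun i => a (i + K)) k)
          rw [← pos_add, Nat.add_comm k K]
          rw [ha (K + k) hk]
          simp [hsTdef, hK (K + k) (Nat.le_add_right K k)]
        have hsim := simulate mv owner cl S' stay T σT' (pos mv v a K) (fun i => a (i + K))
            hallK hX (hσT' _ (hK K le_rfl))
        exact parityWin_tail mv cl K hsim
      · push_neg at hfin2
        refine ⟨d + 1, hTpar, ?_, ?_⟩
        · apply infinite_of_unbounded
          intro K
          obtain ⟨k, hk1, hk2⟩ := hfin2 K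
          have hkA : pos mv v a k ∈ A := by
            by_contra h2
            exact hk2 ⟨hinv k, h2⟩
          obtain ⟨j, hj1, hj2⟩ := hreach (rk (pos mv v a k)) k hkA rfl
          exact ⟨j, by omega, hj2⟩
        · intro m' hm'
          obtain ⟨k, hk⟩ := hm'.nonempty
          have := hb (pos mv v a k)
          simp only [Set.mem_setOf_eq] at hk
          omega
    -- conclusion of the successor case
    intro v
    by_cases hv : v ∈ W
    · exact Or.inr hv
    · exact Or.inl ⟨sT, hfinal v hv⟩
end PGame


section Instantiation

lemma parityWin_true_iff (s : ℕ → ℕ) : PGame.parityWin true s ↔ MaxInfEven s := by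
  unfold PGame.parityWin MaxInfEven PGame.ParityOk
  simp

lemma parityWin_false_not {s : ℕ → ℕ} (h : PGame.parityWin false s) : ¬ MaxInfEven s := by
  intro hM
  exact PGame.parityWin_not_both (P := true) ((parityWin_true_iff s).mpr hM) h

variable {Q : Type} [Fintype Q] (A : DPA Q)

/-- the game graph of the Gale–Stewart game of `A`. -/
abbrev GV (Q : Type) : Type := (Q × ℕ) × Bool

def gmv : GV Q → ℕ → GV Q := fun c m => (A.next c.1 m, !c.2)

def gowner (Q : Type) : GV Q → Bool := fun c => c.2

def gcl : GV Q → ℕ := fun c => A.color c.1.1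

def gstart : GV Q := ((A.q0, 0), false)

lemma gpos_fst (α : ℕ → ℕ) : ∀ k, (PGame.pos (gmv A) (gstart A) α k).1 = A.run α k := by
  intro k
  induction k with
  | zero => rfl
  | succ k ih =>
    show (gmv A (PGame.pos (gmv A) (gstart A) α k) (α k)).1 = A.next (A.run α k) (α k)
    rw [← ih]; rfl

lemma gpos_snd (α : ℕ → ℕ) : ∀ k, (PGame.pos (gmv A) (gstart A) α k).2 = decide (k % 2 = 1) := by
  intro k
  induction k with
  | zero => rfl
  | succ k ih =>
    show (!(PGame.pos (gmv A) (gstart A) α k).2) = decide ((k + 1) % 2 = 1)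
    rw [ih]
    rcases Nat.mod_two_eq_zero_or_one k with h | h <;> simp [h, Nat.add_mod]

lemma gcl_run (α : ℕ → ℕ) :
    (fun k => gcl A (PGame.pos (gmv A) (gstart A) α k)) = fun k => A.color (A.run α k).1 := by
  funext k
  show A.color (PGame.pos (gmv A) (gstart A) α k).1.1 = _
  rw [gpos_fst]

lemma interleave_even (m n : ℕ → ℕ) (k : ℕ) : interleave m n (2 * k) = m k := by
  simp [interleave, Nat.mul_mod_right, Nat.mul_div_cancel_left k (by norm_num : 0 < 2)]

lemma interleave_odd (m n : ℕ → ℕ) (k : ℕ) : interleave m n (2 * k + 1) = n k := by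
  have h1 : (2 * k + 1) % 2 = 1 := by omega
  have h2 : (2 * k + 1) / 2 = k := by omega
  simp [interleave, h1, h2]

lemma prefixList_concat (m : ℕ → ℕ) (k : ℕ) :
    prefixList m k = (List.ofFn fun i : Fin k => m i.val) ++ [m k] := by
  unfold prefixList
  rw [List.ofFn_succ']
  simp [List.concat_eq_append]

/-- Player II extracts a winning strategy from a positional one. -/
lemma winsII_of_PW (h : PGame.PW (gmv A) (gowner Q) (gcl A) true (gstart A)) :
    WinsII A.Lang := by
  obtain ⟨s, hs⟩ := h
  set step : GV Q → ℕ → GV Q := fun u x => gmv A (gmv A u x) (s (gmv A u x)) with hstep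
  set f : List ℕ → GV Q := fun l => l.foldl step (gstart A) with hf
  set σ : List ℕ → ℕ := fun l => s (gmv A (f l.dropLast) (l.getLastD 0)) with hσ
  refine ⟨σ, ?_⟩
  intro m
  set n : ℕ → ℕ := fun k => σ (prefixList m k) with hn
  set α : ℕ → ℕ := fun k => interleave m n k with hα
  have hαeq : interleave m n = α := rfl
  have hαe : ∀ k, α (2 * k) = m k := fun k => interleave_even m n k
  have hαo : ∀ k, α (2 * k + 1) = n k := fun k => interleave_odd m n k
  have hnval : ∀ k, n k = s (gmv A (f (List.ofFn fun i : Fin k => m i.val)) (m k)) := by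
    intro k
    show σ (prefixList m k) = _
    rw [hσ]
    simp only [prefixList_concat m k, List.dropLast_concat, List.getLastD_concat]
  have hposf : ∀ k, PGame.pos (gmv A) (gstart A) α (2 * k)
      = f (List.ofFn fun i : Fin k => m i.val) := by
    intro k
    induction k with
    | zero => rfl
    | succ k ih =>
      have e1 : 2 * (k + 1) = (2 * k + 1) + 1 := by ring
      rw [e1]
      show gmv A (PGame.pos (gmv A) (gstart A) α (2 * k + 1)) (α (2 * k + 1)) = _
      have e2 : PGame.pos (gmv A) (gstart A) α (2 * k + 1)
          = gmv A (f (List.ofFn fun i : Fin k => m i.val)) (m k) := by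
        show gmv A (PGame.pos (gmv A) (gstart A) α (2 * k)) (α (2 * k)) = _
        rw [ih, hαe]
      rw [e2, hαo, hnval k]
      have e3 : (List.ofFn fun i : Fin (k+1) => m i.val)
          = (List.ofFn fun i : Fin k => m i.val) ++ [m k] := by
        rw [List.ofFn_succ']; simp [List.concat_eq_append]
      have e4 : ∀ (l : List ℕ) (x : ℕ), f (l ++ [x]) = step (f l) x := by
        intro l x
        simp only [hf, List.foldl_append, List.foldl_cons, List.foldl_nil]
      rw [e3, e4]
  have hcons : PGame.Cons (gmv A) (gowner Q) true s (gstart A) α := by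
    intro k hk
    have h2 : k % 2 = 1 := by
      have hk2 : (PGame.pos (gmv A) (gstart A) α k).2 = true := hk
      rw [gpos_snd A α k] at hk2
      simpa using hk2
    obtain ⟨j, rfl⟩ : ∃ j, k = 2 * j + 1 := ⟨k / 2, by omega⟩
    have e2 : PGame.pos (gmv A) (gstart A) α (2 * j + 1)
        = gmv A (f (List.ofFn fun i : Fin j => m i.val)) (m j) := by
      show gmv A (PGame.pos (gmv A) (gstart A) α (2 * j)) (α (2 * j)) = _
      rw [hposf, hαe]
    rw [e2, hαo, hnval j]
  have hwin := hs α hcons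
  rw [gcl_run] at hwin
  show interleave m n ∈ A.Lang
  rw [hαeq]
  exact (parityWin_true_iff _).mp hwin

/-- Player I extracts a winning strategy from a positional one. -/
lemma winsI_of_PW (h : PGame.PW (gmv A) (gowner Q) (gcl A) false (gstart A)) :
    WinsI A.Lang := by
  obtain ⟨s, hs⟩ := h
  set step : GV Q → ℕ → GV Q := fun u x => gmv A (gmv A u x) (s (gmv A u x)) with hstep
  set g : List ℕ → GV Q := fun l => l.foldl step (gmv A (gstart A) (s (gstart A))) with hg
  set τ : List ℕ → ℕ := fun l =>
    if l.isEmpty then s (gstart A) else s (gmv A (g l.dropLast) (l.getLastD 0)) with hτ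
  refine ⟨τ, ?_⟩
  intro n
  set m : ℕ → ℕ := fun k => playerIMoves τ n k with hm
  set α : ℕ → ℕ := fun k => interleave m n k with hα
  have hαeq : interleave (playerIMoves τ n) n = α := rfl
  have hαe : ∀ k, α (2 * k) = m k := fun k => interleave_even m n k
  have hαo : ∀ k, α (2 * k + 1) = n k := fun k => interleave_odd m n k
  have hm0 : m 0 = s (gstart A) := rfl
  have hmval : ∀ k, m (k + 1) = s (gmv A (g (List.ofFn fun i : Fin k => n i.val)) (n k)) := by
    intro k
    show τ (prefixList n k) = _
    simp only [hτ, prefixList_concat n k, List.dropLast_concat, List.getLastD_concat]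
    simp
  have hposg : ∀ k, PGame.pos (gmv A) (gstart A) α (2 * k + 1)
      = g (List.ofFn fun i : Fin k => n i.val) := by
    intro k
    induction k with
    | zero =>
      show gmv A (gstart A) (α 0) = g []
      have : α 0 = m 0 := hαe 0
      rw [this, hm0]; rfl
    | succ k ih =>
      have e1 : 2 * (k + 1) + 1 = ((2 * k + 1) + 1) + 1 := by ring
      rw [e1]
      show gmv A (gmv A (PGame.pos (gmv A) (gstart A) α (2 * k + 1)) (α (2 * k + 1)))
        (α ((2 * k + 1) + 1)) = _
      have e2 : (2 * k + 1) + 1 = 2 * (k + 1) := by ring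
      rw [ih, hαo, e2, hαe, hmval k]
      have e3 : (List.ofFn fun i : Fin (k+1) => n i.val)
          = (List.ofFn fun i : Fin k => n i.val) ++ [n k] := by
        rw [List.ofFn_succ']; simp [List.concat_eq_append]
      have e4 : ∀ (l : List ℕ) (x : ℕ), g (l ++ [x]) = step (g l) x := by
        intro l x
        simp only [hg, List.foldl_append, List.foldl_cons, List.foldl_nil]
      rw [e3, e4]
  have hcons : PGame.Cons (gmv A) (gowner Q) false s (gstart A) α := by
    intro k hk
    have h2 : k % 2 = 0 := by
      have hk2 : (PGame.pos (gmv A) (gstart A) α k).2 = false := hk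
      rw [gpos_snd A α k] at hk2
      simp at hk2
      omega
    obtain ⟨j, rfl⟩ : ∃ j, k = 2 * j := ⟨k / 2, by omega⟩
    cases j with
    | zero =>
      show α 0 = s (PGame.pos (gmv A) (gstart A) α 0)
      have : α 0 = m 0 := hαe 0
      rw [this, hm0]; rfl
    | succ j =>
      have e1 : 2 * (j + 1) = (2 * j + 1) + 1 := by ring
      rw [e1]
      show α ((2 * j + 1) + 1)
        = s (gmv A (PGame.pos (gmv A) (gstart A) α (2 * j + 1)) (α (2 * j + 1)))
      rw [hposg, hαo]
      have e2 : (2 * j + 1) + 1 = 2 * (j + 1) := by ring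
      rw [e2, hαe, hmval j]
  have hwin := hs α hcons
  rw [gcl_run] at hwin
  show interleave (playerIMoves τ n) n ∉ A.Lang
  rw [hαeq]
  exact parityWin_false_not hwin

end Instantiation

/-- For every deterministic parity automaton `A` over ℕ, the Gale–Stewart game
`Γ(L_A)` is determined. -/
theorem statement2 {Q : Type} [Fintype Q] (A : DPA Q) :
    WinsI A.Lang ∨ WinsII A.Lang := by
  classical
  set d : ℕ := Finset.univ.sup A.color with hd
  have hb : ∀ u : GV Q, gcl A u ≤ d :=
    fun u => Finset.le_sup (f := A.color) (Finset.mem_univ u.1.1)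
  rcases PGame.pdet (gowner Q) d (gmv A) (gcl A) hb (gstart A) with h | h
  · exact Or.inr (winsII_of_PW A h)
  · exact Or.inl (winsI_of_PW A h)
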